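/- Let H be a closed subgroup of GL(n,ℝ) and let U ⊆ ℝⁿ be open and Hᵀ-invariant. If there exists a topological quasi-section for U, then for all compact sets C₁, C₂ ⊆ U the set ((C₁,C₂)) = {h ∈ H : hᵀC₁ ∩ C₂ ≠ ∅} is relatively compact in H. -/

import Mathlib

open Matrix Set Topology
open scoped MatrixGroups

noncomputable section

variable {n : ℕ}

/-- The transpose action of an element of `GL(n,ℝ)` on `ℝⁿ`: `(h, ξ) ↦ hᵀ ξ`. -/
def tAct (h : GL (Fin n) ℝ) (v : Fin n → ℝ) : Fin n → ℝ :=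
  ((h : Matrix (Fin n) (Fin n) ℝ)ᵀ) *ᵥ v

/-- A set `U ⊆ ℝⁿ` is `Hᵀ`-invariant. -/
def TInvariant (H : Subgroup (GL (Fin n) ℝ)) (U : Set (Fin n → ℝ)) : Prop :=
  ∀ h ∈ H, ∀ v ∈ U, tAct h v ∈ U

/-- `HᵀC = {hᵀ c : h ∈ H, c ∈ C}`. -/
def tOrb (H : Subgroup (GL (Fin n) ℝ)) (C : Set (Fin n → ℝ)) : Set (Fin n → ℝ) :=
  {v | ∃ h ∈ H, ∃ c ∈ C, tAct h c = v}

/-- `((Y,Z)) = {h ∈ H : hᵀY ∩ Z ≠ ∅}`, as a set of elements of `GL(n,ℝ)`. -/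
def meetSet (H : Subgroup (GL (Fin n) ℝ)) (Y Z : Set (Fin n → ℝ)) :
    Set (GL (Fin n) ℝ) :=
  {h | h ∈ H ∧ ∃ y ∈ Y, tAct h y ∈ Z}

/-- `C` is a topological quasi-section for `U`: `C` is open, `HᵀC = U`, and `((C,C))`
is relatively compact. -/
def IsQuasiSection (H : Subgroup (GL (Fin n) ℝ)) (U C : Set (Fin n → ℝ)) : Prop :=
  IsOpen C ∧ C ⊆ U ∧ tOrb H C = U ∧ IsCompact (closure (meetSet H C C))

/-- `C` is a topological section for `U`: the map `H × C → U, (h,c) ↦ hᵀc` is a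
homeomorphism. -/
def IsTopSection (H : Subgroup (GL (Fin n) ℝ)) (U C : Set (Fin n → ℝ)) : Prop :=
  C ⊆ U ∧ ∃ e : (↥H × ↥C) ≃ₜ ↥U,
    ∀ (h : ↥H) (c : ↥C), ((e (h, c) : ↥U) : Fin n → ℝ) = tAct (h : GL (Fin n) ℝ) (c : Fin n → ℝ)

/-- The orbit equivalence relation on `U` induced by the transpose action of `H`.
`Quot (orbitRel H U)` is the orbit space `U/Hᵀ`, carrying the quotient topology. -/
def orbitRel (H : Subgroup (GL (Fin n) ℝ)) (U : Set (Fin n → ℝ)) (x y : U) : Prop :=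
  ∃ h ∈ H, tAct h (x : Fin n → ℝ) = (y : Fin n → ℝ)

/-!
Cover the compact sets `C₁` and `C₂` by finitely many translates `gᵀC` (`g ∈ H`) of the open
set `C`. If `hᵀ(gᵀC)` meets `kᵀC` then `g h k⁻¹ ∈ ((C,C))`, so `((C₁,C₂))` lies in the finite
union of the compact sets `g⁻¹ · closure ((C,C)) · k`.
-/

lemma tAct_mul (g h : GL (Fin n) ℝ) (v : Fin n → ℝ) :
    tAct (g * h) v = tAct h (tAct g v) := by
  simp [tAct, Matrix.transpose_mul, Matrix.mulVec_mulVec]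

lemma tAct_one (v : Fin n → ℝ) : tAct (1 : GL (Fin n) ℝ) v = v := by
  simp [tAct]

lemma tAct_inv_tAct (h : GL (Fin n) ℝ) (v : Fin n → ℝ) : tAct h⁻¹ (tAct h v) = v := by
  rw [← tAct_mul, mul_inv_cancel, tAct_one]

lemma tAct_tAct_inv (h : GL (Fin n) ℝ) (v : Fin n → ℝ) : tAct h (tAct h⁻¹ v) = v := by
  simpa using tAct_inv_tAct h⁻¹ v

lemma continuous_tAct (h : GL (Fin n) ℝ) : Continuous (tAct h) :=
  LinearMap.continuous_of_finiteDimensional (Matrix.mulVecLin ((h : Matrix (Fin n) (Fin n) ℝ)ᵀ))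

lemma IsOpen.image_tAct {C : Set (Fin n → ℝ)} (hC : IsOpen C) (h : GL (Fin n) ℝ) :
    IsOpen (tAct h '' C) := by
  rw [image_eq_preimage_of_inverse (tAct_inv_tAct h) (tAct_tAct_inv h)]
  exact hC.preimage (continuous_tAct _)

lemma tOrb_eq_biUnion (H : Subgroup (GL (Fin n) ℝ)) (C : Set (Fin n → ℝ)) :
    tOrb H C = ⋃ g ∈ (H : Set (GL (Fin n) ℝ)), tAct g '' C := by
  ext v
  simp [tOrb]

lemma IsCompact.exists_finite_cover_tAct_image {H : Subgroup (GL (Fin n) ℝ)}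
    {C K : Set (Fin n → ℝ)} (hK : IsCompact K) (hC : IsOpen C) (hKC : K ⊆ tOrb H C) :
    ∃ s ⊆ (H : Set (GL (Fin n) ℝ)), s.Finite ∧ K ⊆ ⋃ g ∈ s, tAct g '' C :=
  hK.elim_finite_subcover_image (fun g _ => hC.image_tAct g) (tOrb_eq_biUnion H C ▸ hKC)

section meetSet

variable {H : Subgroup (GL (Fin n) ℝ)}

lemma meetSet_mono {Y Y' Z Z' : Set (Fin n → ℝ)} (hY : Y ⊆ Y') (hZ : Z ⊆ Z') :
    meetSet H Y Z ⊆ meetSet H Y' Z' := by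
  rintro h ⟨hH, y, hy, hyz⟩
  exact ⟨hH, y, hY hy, hZ hyz⟩

lemma meetSet_biUnion_subset {ι κ : Type*} (s : Set ι) (t : Set κ)
    (Y : ι → Set (Fin n → ℝ)) (Z : κ → Set (Fin n → ℝ)) :
    meetSet H (⋃ i ∈ s, Y i) (⋃ j ∈ t, Z j) ⊆ ⋃ i ∈ s, ⋃ j ∈ t, meetSet H (Y i) (Z j) := by
  rintro h ⟨hH, y, hy, hyz⟩
  obtain ⟨i, hi, hyi⟩ := mem_iUnion₂.1 hy
  obtain ⟨j, hj, hyj⟩ := mem_iUnion₂.1 hyz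
  exact mem_biUnion hi (mem_biUnion hj ⟨hH, y, hyi, hyj⟩)

lemma meetSet_tAct_image_subset {g k : GL (Fin n) ℝ} (hg : g ∈ H) (hk : k ∈ H)
    (Y Z : Set (Fin n → ℝ)) :
    meetSet H (tAct g '' Y) (tAct k '' Z) ⊆ (fun h => g⁻¹ * h * k) '' meetSet H Y Z := by
  rintro h ⟨hH, _, ⟨y, hy, rfl⟩, z, hz, hzy⟩
  have hghk : tAct (g * h * k⁻¹) y = z := by
    rw [tAct_mul, tAct_mul, ← hzy, tAct_inv_tAct]
  refine ⟨g * h * k⁻¹, ⟨H.mul_mem (H.mul_mem hg hH) (H.inv_mem hk), y, hy, hghk ▸ hz⟩, ?_⟩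
  group

lemma isCompact_closure_meetSet_biUnion {Y Z : Set (Fin n → ℝ)}
    (hYZ : IsCompact (closure (meetSet H Y Z))) {s t : Set (GL (Fin n) ℝ)}
    (hsH : s ⊆ H) (htH : t ⊆ H) (hs : s.Finite) (ht : t.Finite) :
    IsCompact (closure (meetSet H (⋃ g ∈ s, tAct g '' Y) (⋃ k ∈ t, tAct k '' Z))) := by
  refine IsCompact.closure_of_subset
    (K := ⋃ g ∈ s, ⋃ k ∈ t, (fun h => g⁻¹ * h * k) '' closure (meetSet H Y Z)) ?_ ?_
  · exact hs.isCompact_biUnion fun g _ => ht.isCompact_biUnion fun k _ =>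
      hYZ.image (by fun_prop)
  · refine (meetSet_biUnion_subset s t _ _).trans (biUnion_mono subset_rfl fun g hg => ?_)
    refine biUnion_mono subset_rfl fun k hk => ?_
    exact (meetSet_tAct_image_subset (hsH hg) (htH hk) Y Z).trans (image_mono subset_closure)

end meetSet

theorem meetSet_relCompact_of_quasiSection_general
    (H : Subgroup (GL (Fin n) ℝ))
    (U : Set (Fin n → ℝ))
    (C : Set (Fin n → ℝ)) (hC : IsQuasiSection H U C) :
    ∀ C₁ C₂ : Set (Fin n → ℝ), C₁ ⊆ U → C₂ ⊆ U → IsCompact C₁ → IsCompact C₂ →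
      IsCompact (closure (meetSet H C₁ C₂)) := by
  intro C₁ C₂ hC₁U hC₂U hC₁ hC₂
  obtain ⟨hCopen, -, hOrb, hCC⟩ := hC
  obtain ⟨s, hsH, hs, hC₁s⟩ := hC₁.exists_finite_cover_tAct_image hCopen (hOrb ▸ hC₁U)
  obtain ⟨t, htH, ht, hC₂t⟩ := hC₂.exists_finite_cover_tAct_image hCopen (hOrb ▸ hC₂U)
  exact (isCompact_closure_meetSet_biUnion hCC hsH htH hs ht).closure_of_subset
    ((meetSet_mono hC₁s hC₂t).trans subset_closure)

/-- If the open `Hᵀ`-invariant set `U` admits a topological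
quasi-section, then for all compact `C₁, C₂ ⊆ U` the set `((C₁,C₂))` is relatively
compact in `H`. -/
theorem meetSet_relCompact_of_quasiSection
    (H : Subgroup (GL (Fin n) ℝ)) (hH : IsClosed (H : Set (GL (Fin n) ℝ)))
    (U : Set (Fin n → ℝ)) (hUopen : IsOpen U) (hUinv : TInvariant H U)
    (C : Set (Fin n → ℝ)) (hC : IsQuasiSection H U C) :
    ∀ C₁ C₂ : Set (Fin n → ℝ), C₁ ⊆ U → C₂ ⊆ U → IsCompact C₁ → IsCompact C₂ →
      IsCompact (closure (meetSet H C₁ C₂)) :=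
  meetSet_relCompact_of_quasiSection_general H U C hC
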